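/- For all x, y ∈ ℓ¹, the fringe sets F_x and F_y satisfy exactly one of: F_x ∩ F_y = ∅, or F_x ⊆ F_y, or F_y ⊆ F_x. In particular, if x ∉ [[0,y]]_sp and y ∉ [[0,x]]_sp then F_x ∩ F_y = ∅. -/

import Mathlib

/-- `ℓ¹`, the Banach space of absolutely summable real sequences. -/
noncomputable abbrev Ell1 : Type := lp (fun _ : ℕ => ℝ) 1

/-- Coordinate truncation keeping the first `m` coordinates. -/
noncomputable def trunc (m : ℕ) (x : Ell1) : Ell1 :=
  ⟨fun i => if i < m then x i else 0, by
    refine Memℓp.of_exponent_ge (memℓp_zero ?_) zero_le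
    refine Set.Finite.subset (Set.finite_Iio m) ?_
    intro i hi
    simp only [Set.mem_setOf_eq] at hi
    by_contra h
    simp only [Set.mem_Iio, not_lt] at h
    exact hi (if_neg (not_lt.mpr h))⟩

/-- The open stick-breaking path `[[0,x]]°_sp`. -/
def stickCore (x : Ell1) : Set Ell1 :=
  ⋃ m : ℕ, {y | ∃ s ∈ Set.Icc (0 : ℝ) 1, y = (1 - s) • trunc m x + s • trunc (m + 1) x}

/-- The stick-breaking path `[[0,x]]_sp`, the closure of `[[0,x]]°_sp` in `ℓ¹`. -/
noncomputable def stickPath (x : Ell1) : Set Ell1 :=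
  closure (stickCore x)


/-- The fringe set of `x`: all `y` whose stick-breaking path passes through `x`. -/
noncomputable def fringe (x : Ell1) : Set Ell1 :=
  {y | x ∈ stickPath y}

lemma trunc_apply (m : ℕ) (x : Ell1) (i : ℕ) : trunc m x i = if i < m then x i else 0 := rfl

lemma mix_apply (m : ℕ) (s : ℝ) (y : Ell1) (i : ℕ) :
    ((1 - s) • trunc m y + s • trunc (m + 1) y : Ell1) i =
      if i < m then y i else if i = m then s * y i else 0 := by
  have : ((1 - s) • trunc m y + s • trunc (m + 1) y : Ell1) i
      = (1 - s) * (trunc m y i) + s * (trunc (m + 1) y i) := by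
    rw [lp.coeFn_add, Pi.add_apply, lp.coeFn_smul, lp.coeFn_smul]
    rfl
  rw [this, trunc_apply, trunc_apply]
  rcases lt_trichotomy i m with h | h | h
  · rw [if_pos h, if_pos (h.trans (Nat.lt_succ_self m)), if_pos h]; ring
  · subst h
    rw [if_neg (lt_irrefl i), if_pos (Nat.lt_succ_self i), if_neg (lt_irrefl i), if_pos rfl]; ring
  · rw [if_neg (not_lt.2 h.le), if_neg (not_lt.2 h), if_neg (not_lt.2 h.le),
      if_neg (Nat.ne_of_gt h)]; ring

lemma mem_stickPath_of (x y : Ell1) (m : ℕ) (s : ℝ) (hs0 : 0 ≤ s) (hs1 : s ≤ 1)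
    (h1 : ∀ i < m, x i = y i) (h2 : x m = s * y m) (h3 : ∀ i, m < i → x i = 0) :
    x ∈ stickPath y := by
  apply subset_closure
  refine Set.mem_iUnion.2 ⟨m, s, ⟨hs0, hs1⟩, ?_⟩
  apply lp.ext
  funext i
  rw [mix_apply]
  rcases lt_trichotomy i m with h | h | h
  · rw [if_pos h]; exact h1 i h
  · subst h; rw [if_neg (lt_irrefl i), if_pos rfl]; exact h2
  · rw [if_neg (not_lt.2 h.le), if_neg (Nat.ne_of_gt h)]; exact h3 i h

lemma exists_of_mem_stickPath {x y : Ell1} (h : x ∈ stickPath y) :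
    x = y ∨ ∃ m, ∃ s, 0 ≤ s ∧ s ≤ 1 ∧ (∀ i < m, x i = y i) ∧ x m = s * y m ∧
      ∀ i, m < i → x i = 0 := by
  by_cases hxy : x = y
  · exact Or.inl hxy
  right
  have hne : ∃ i, x i ≠ y i := by
    by_contra hc
    push_neg at hc
    exact hxy (lp.ext (funext hc))
  set m := Nat.find hne with hm
  have hmne : x m ≠ y m := Nat.find_spec hne
  have hlt : ∀ i < m, x i = y i := fun i hi => not_not.1 (Nat.find_min hne hi)
  set d : ℝ := |x m - y m| with hd
  have hd0 : 0 < d := abs_pos.2 (sub_ne_zero.2 hmne)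
  -- approximation: for every ε > 0 there is a core point close to x with index ≤ m
  have key : ∀ ε > (0:ℝ), ∃ k ≤ m, ∃ t : ℝ, 0 ≤ t ∧ t ≤ 1 ∧
      ∀ i, dist (x i) (((1 - t) • trunc k y + t • trunc (k+1) y : Ell1) i) < ε := by
    intro ε hε
    have hε' : 0 < min ε d := lt_min hε hd0
    obtain ⟨z, hz, hdist⟩ := Metric.mem_closure_iff.1 h _ hε'
    obtain ⟨k, t, ⟨ht0, ht1⟩, rfl⟩ := Set.mem_iUnion.1 hz
    have hcoord : ∀ i, dist (x i) (((1 - t) • trunc k y + t • trunc (k+1) y : Ell1) i)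
        < min ε d := by
      intro i
      calc dist (x i) (((1 - t) • trunc k y + t • trunc (k+1) y : Ell1) i)
          ≤ dist x ((1 - t) • trunc k y + t • trunc (k+1) y : Ell1) := by
            rw [dist_eq_norm, dist_eq_norm]
            have := lp.norm_apply_le_norm one_ne_zero
              (x - ((1 - t) • trunc k y + t • trunc (k+1) y)) i
            simpa [lp.coeFn_sub] using this
        _ < min ε d := hdist
    refine ⟨k, ?_, t, ht0, ht1, fun i => (hcoord i).trans_le (min_le_left _ _)⟩
    by_contra hk
    push_neg at hk
    have := hcoord m
    rw [mix_apply, if_pos hk] at this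
    exact absurd (this.trans_le (min_le_right _ _)) (by simp [hd, Real.dist_eq])
  -- tail coordinates vanish
  have htail : ∀ i, m < i → x i = 0 := by
    intro i hi
    have : ∀ ε > (0:ℝ), |x i| < ε := by
      intro ε hε
      obtain ⟨k, hk, t, ht0, ht1, hcoord⟩ := key ε hε
      have := hcoord i
      rwa [mix_apply, if_neg (not_lt.2 ((hk.trans hi.le).trans (le_refl i))),
        if_neg (Nat.ne_of_gt (lt_of_le_of_lt hk hi)), dist_zero_right, Real.norm_eq_abs] at this
    by_contra hxi
    exact absurd (this _ (abs_pos.2 hxi)) (lt_irrefl _)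
  -- coordinate m lies on the segment from 0 to y m
  have hseg : x m ∈ segment ℝ 0 (y m) := by
    have hclosed : IsClosed (segment ℝ 0 (y m)) := by
      rw [segment_eq_uIcc, Set.uIcc]; exact isClosed_Icc
    rw [← hclosed.closure_eq]
    refine Metric.mem_closure_iff.2 fun ε hε => ?_
    obtain ⟨k, hk, t, ht0, ht1, hcoord⟩ := key ε hε
    rcases eq_or_lt_of_le hk with hk' | hk'
    · subst hk'
      refine ⟨t * y m, ?_, ?_⟩
      · rw [segment_eq_image]
        exact ⟨t, ⟨ht0, ht1⟩, by simp⟩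
      · have := hcoord m
        rwa [mix_apply, if_neg (lt_irrefl m), if_pos rfl] at this
    · refine ⟨0, left_mem_segment ℝ 0 (y m), ?_⟩
      have := hcoord m
      rwa [mix_apply, if_neg (not_lt.2 hk), if_neg (Nat.ne_of_gt hk')] at this
  rw [segment_eq_image] at hseg
  obtain ⟨s, ⟨hs0, hs1⟩, hs⟩ := hseg
  exact ⟨m, s, hs0, hs1, hlt, by simpa using hs.symm, htail⟩

lemma stickPath_trans {x y z : Ell1} (hxy : x ∈ stickPath y) (hyz : y ∈ stickPath z) :
    x ∈ stickPath z := by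
  rcases exists_of_mem_stickPath hxy with rfl | ⟨m, s, hs0, hs1, h1, h2, h3⟩
  · exact hyz
  rcases exists_of_mem_stickPath hyz with rfl | ⟨n, t, ht0, ht1, k1, k2, k3⟩
  · exact mem_stickPath_of x y m s hs0 hs1 h1 h2 h3
  rcases lt_trichotomy m n with hmn | rfl | hmn
  · exact mem_stickPath_of x z m s hs0 hs1
      (fun i hi => (h1 i hi).trans (k1 i (hi.trans hmn)))
      (by rw [h2, k1 m hmn]) h3
  · exact mem_stickPath_of x z m (s * t) (mul_nonneg hs0 ht0)
      (mul_le_one₀ hs1 ht0 ht1)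
      (fun i hi => (h1 i hi).trans (k1 i hi))
      (by rw [h2, k2]; ring) h3
  · have hym : y m = 0 := k3 m hmn
    have : x = y := by
      apply lp.ext; funext i
      rcases lt_trichotomy i m with h | rfl | h
      · exact h1 i h
      · rw [h2, hym, mul_zero]
      · rw [h3 i h, k3 i (hmn.trans h)]
    rw [this]; exact hyz

lemma stickPath_comparable {x y z : Ell1} (hx : x ∈ stickPath z) (hy : y ∈ stickPath z) :
    x ∈ stickPath y ∨ y ∈ stickPath x := by
  -- helper: given data for x at (m,s) and y at (n,t) with m < n, or m = n ∧ s*z m "≤" t*z m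
  rcases exists_of_mem_stickPath hx with rfl | ⟨m, s, hs0, hs1, h1, h2, h3⟩
  · exact Or.inr hy
  rcases exists_of_mem_stickPath hy with rfl | ⟨n, t, ht0, ht1, k1, k2, k3⟩
  · exact Or.inl (mem_stickPath_of x y m s hs0 hs1 h1 h2 h3)
  have main : ∀ (a b : Ell1) (p q : ℕ) (u v : ℝ), 0 ≤ u → u ≤ 1 → 0 ≤ v → v ≤ 1 →
      (∀ i < p, a i = z i) → a p = u * z p → (∀ i, p < i → a i = 0) →
      (∀ i < q, b i = z i) → b q = v * z q → (∀ i, q < i → b i = 0) →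
      (p < q ∨ (p = q ∧ u ≤ v)) → a ∈ stickPath b := by
    intro a b p q u v hu0 hu1 hv0 hv1 a1 a2 a3 b1 b2 b3 hpq
    rcases hpq with hpq | ⟨rfl, huv⟩
    · exact mem_stickPath_of a b p u hu0 hu1
        (fun i hi => (a1 i hi).trans (b1 i (hi.trans hpq)).symm)
        (by rw [a2, b1 p hpq]) a3
    · rcases eq_or_lt_of_le hv0 with hv | hv
      · have hu : u = 0 := le_antisymm (huv.trans hv.symm.le) hu0
        exact mem_stickPath_of a b p 0 le_rfl zero_le_one
          (fun i hi => (a1 i hi).trans (b1 i hi).symm)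
          (by rw [a2, hu, zero_mul, zero_mul]) a3
      · refine mem_stickPath_of a b p (u / v) (div_nonneg hu0 hv.le)
          ((div_le_one hv).2 (huv.trans ?_))
          (fun i hi => (a1 i hi).trans (b1 i hi).symm)
          (by rw [a2, b2]; field_simp) a3
        exact le_refl v
  rcases lt_trichotomy m n with hmn | rfl | hmn
  · exact Or.inl (main x y m n s t hs0 hs1 ht0 ht1 h1 h2 h3 k1 k2 k3 (Or.inl hmn))
  · rcases le_total s t with hst | hst
    · exact Or.inl (main x y m m s t hs0 hs1 ht0 ht1 h1 h2 h3 k1 k2 k3 (Or.inr ⟨rfl, hst⟩))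
    · exact Or.inr (main y x m m t s ht0 ht1 hs0 hs1 k1 k2 k3 h1 h2 h3 (Or.inr ⟨rfl, hst⟩))
  · exact Or.inr (main y x n m t s ht0 ht1 hs0 hs1 k1 k2 k3 h1 h2 h3 (Or.inl hmn))

lemma mem_fringe_iff {z w : Ell1} : w ∈ fringe z ↔ z ∈ stickPath w := Iff.rfl

set_option maxHeartbeats 1000000 in
/-- fringe sets are nested or disjoint; in particular, if neither of `x, y` lies
on the stick-breaking path of the other then their fringe sets are disjoint. -/
theorem fringe_nested_or_disjoint (x y : Ell1) :
    (fringe x ∩ fringe y = ∅ ∨ fringe x ⊆ fringe y ∨ fringe y ⊆ fringe x) ∧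
      (x ∉ stickPath y → y ∉ stickPath x → fringe x ∩ fringe y = ∅) := by
  constructor
  · by_cases hne : fringe x ∩ fringe y = ∅
    · exact Or.inl hne
    · right
      rw [Set.eq_empty_iff_forall_notMem] at hne
      push_neg at hne
      obtain ⟨z, hz⟩ := hne
      rw [Set.mem_inter_iff, mem_fringe_iff, mem_fringe_iff] at hz
      rcases stickPath_comparable hz.1 hz.2 with h | h
      · refine Or.inr fun w hw => ?_
        rw [mem_fringe_iff] at hw ⊢
        exact stickPath_trans h hw
      · refine Or.inl fun w hw => ?_
        rw [mem_fringe_iff] at hw ⊢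
        exact stickPath_trans h hw
  · intro hxy hyx
    rw [Set.eq_empty_iff_forall_notMem]
    intro z hz
    rw [Set.mem_inter_iff, mem_fringe_iff, mem_fringe_iff] at hz
    rcases stickPath_comparable hz.1 hz.2 with h | h
    · exact hxy h
    · exact hyx h
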